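/- If a normed space X has Rademacher type p with constant C (i.e., E‖Σⱼ ε_j x_j‖ᵖ ≤ Cᵖ Σⱼ ‖x_j‖ᵖ for all finite sequences), then X has Enflo type p with constant at most (π/√2)·C: for every n and every f : {−1,1}ⁿ → X, E‖(f(ε) − f(−ε))/2‖ᵖ ≤ ((π/√2)C)ᵖ Σⱼ E‖D_j f(ε)‖ᵖ. -/

import Mathlib

open Real MeasureTheory Finset

noncomputable section

/-- Sign of a boolean: `true ↦ 1`, `false ↦ -1`. -/
def sgn (b : Bool) : ℝ := if b then 1 else -1

/-- Flip the `j`-th coordinate of a point of the discrete cube `{-1,1}ⁿ`. -/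
def flip' {n : ℕ} (j : Fin n) (x : Fin n → Bool) : Fin n → Bool :=
  Function.update x j (!(x j))

/-- Discrete partial derivative `D_j f(ε) = (f(ε) - f(ε^{(j)}))/2`. -/
def D {n : ℕ} (j : Fin n) (f : (Fin n → Bool) → ℝ) : (Fin n → Bool) → ℝ :=
  fun x => (f x - f (flip' j x)) / 2

/-- `D_j` as a linear map. -/
def DL (n : ℕ) (j : Fin n) : ((Fin n → Bool) → ℝ) →ₗ[ℝ] ((Fin n → Bool) → ℝ) where
  toFun := D j
  map_add' f g := by funext x; simp [D]; ring
  map_smul' c f := by funext x; simp [D]; ring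

/-- The discrete Laplacian `Δ = -∑ⱼ Dⱼ` as a continuous linear map. -/
def Lap (n : ℕ) : ((Fin n → Bool) → ℝ) →L[ℝ] ((Fin n → Bool) → ℝ) :=
  LinearMap.toContinuousLinearMap (-(∑ j : Fin n, DL n j))

/-- The heat semigroup `P_t = e^{tΔ}` on the discrete cube. -/
def P (n : ℕ) (t : ℝ) : ((Fin n → Bool) → ℝ) →L[ℝ] ((Fin n → Bool) → ℝ) :=
  NormedSpace.exp (t • Lap n)

/-- The weight of the biased product measure: probability of `ξ(t) = ξ`. -/
def w (n : ℕ) (t : ℝ) (ξ : Fin n → Bool) : ℝ :=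
  ∏ i : Fin n, (1 + Real.exp (-t) * sgn (ξ i)) / 2

/-- The standardized variable `δ_j(t) = (ξ_j(t) - e^{-t})/√(1-e^{-2t})`. -/
def del (t : ℝ) (b : Bool) : ℝ := (sgn b - Real.exp (-t)) / Real.sqrt (1 - Real.exp (-2 * t))

/-- Coordinatewise product of two points of the cube. -/
def cmul {n : ℕ} (x ξ : Fin n → Bool) : Fin n → Bool := fun i => x i == ξ i


/-!
Let `ξ ∈ {-1,1}ⁿ` have independent coordinates of mean `s ∈ [-1,1]` (law `cubeWeight s`) and let
`T_s f(ε) = E f(εξ)` (`noise f s`). Then `T_1 f = f` and `T_{-1} f = f(-·)`, so by the Minkowski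
integral inequality in `L^p` it suffices to bound `‖d/ds T_s f‖_p`. Differentiating the product
weight, and using that the factor of coordinate `j` is odd under flipping it, gives
`(1 - s²) d/ds T_s f(ε) = E ∑ⱼ (ξⱼ - s) Dⱼf(εξ)`. Jensen, translation invariance, and the
symmetrization `ξⱼ - s = E'(ξⱼ - ξ'ⱼ)` with an independent copy `ξ'`, whose differences are
sign-symmetric, reduce this to Rademacher type:
`‖d/ds T_s f‖_pᵖ ≤ (2/(1-s²))^(p-1) Cᵖ ∑ⱼ ‖Dⱼf‖_pᵖ ≤ (2/(1-s²))^(p/2) Cᵖ ∑ⱼ ‖Dⱼf‖_pᵖ`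
since `p ≤ 2`. Integrating against `∫_{-1}^1 (1-s²)^(-1/2) ds = π` and halving gives `π/√2`.
-/

lemma norm_toLp_ofReal_rpow {ι E : Type*} [Fintype ι] [NormedAddCommGroup E] {p : ℝ} (hp : 0 < p)
    (g : ι → E) : ‖WithLp.toLp (ENNReal.ofReal p) g‖ ^ p = ∑ i, ‖g i‖ ^ p := by
  have hp' : (ENNReal.ofReal p).toReal = p := ENNReal.toReal_ofReal hp.le
  rw [PiLp.norm_eq_sum (by rwa [hp']), hp', ← rpow_mul (by positivity), one_div,
    inv_mul_cancel₀ hp.ne', rpow_one]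

section Analysis

variable {X : Type*} [NormedAddCommGroup X] [NormedSpace ℝ X]

lemma norm_sum_smul_rpow_le {ι : Type*} {p : ℝ} (hp : 1 ≤ p) (t : Finset ι) {w : ι → ℝ}
    (hw : ∀ i ∈ t, 0 ≤ w i) (hw1 : ∑ i ∈ t, w i = 1) (a : ι → X) :
    ‖∑ i ∈ t, w i • a i‖ ^ p ≤ ∑ i ∈ t, w i * ‖a i‖ ^ p := by
  have htri : ‖∑ i ∈ t, w i • a i‖ ≤ ∑ i ∈ t, w i * ‖a i‖ := by
    refine (norm_sum_le _ _).trans (sum_le_sum fun i hi => ?_)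
    rw [norm_smul, Real.norm_of_nonneg (hw i hi)]
  calc ‖∑ i ∈ t, w i • a i‖ ^ p ≤ (∑ i ∈ t, w i * ‖a i‖) ^ p := by gcongr
    _ ≤ ∑ i ∈ t, w i * ‖a i‖ ^ p :=
      Real.rpow_arith_mean_le_arith_mean_rpow t w _ hw hw1 (fun i _ => norm_nonneg _) hp

lemma le_sqrt_two_mul_div_sqrt_of_rpow_le {p u a b : ℝ} (hp1 : 1 ≤ p) (hp2 : p ≤ 2)
    (hu : 0 < u) (hu2 : u ≤ 2) (ha : 0 ≤ a) (hb : 0 ≤ b)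
    (h : u ^ p * a ^ p ≤ u / 2 * 2 ^ p * b ^ p) :
    a ≤ √2 * b / √u := by
  have hp0 : 0 < p := by linarith
  have hcoef : u / 2 * 2 ^ p = u ^ p * (2 / u) ^ (p - 1) := by
    rw [rpow_sub_one (by positivity), div_rpow zero_le_two hu.le]
    field_simp
  have hexp : (2 / u) ^ (p - 1) ≤ (2 / u) ^ (p / 2) :=
    rpow_le_rpow_of_exponent_le ((one_le_div hu).2 hu2) (by linarith)
  have hsqrt : (2 / u) ^ (p / 2) * b ^ p = (√2 * b / √u) ^ p := by
    rw [mul_div_right_comm, ← sqrt_div' _ hu.le, mul_rpow (sqrt_nonneg _) hb, sqrt_eq_rpow,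
      ← rpow_mul (by positivity)]
    ring_nf
  rw [← rpow_le_rpow_iff ha (by positivity) hp0, ← hsqrt]
  rw [hcoef, mul_assoc] at h
  exact (le_of_mul_le_mul_left h (rpow_pos_of_pos hu p)).trans (by gcongr)

lemma hasDerivAt_arcsin_of_mem_Ioo {s : ℝ} (hs : s ∈ Set.Ioo (-1 : ℝ) 1) :
    HasDerivAt arcsin (1 / √(1 - s ^ 2)) s :=
  hasDerivAt_arcsin hs.1.ne' hs.2.ne

lemma intervalIntegrable_one_div_sqrt_one_sub_sq :
    IntervalIntegrable (fun s : ℝ => 1 / √(1 - s ^ 2)) volume (-1) 1 :=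
  intervalIntegral.intervalIntegrable_deriv_of_nonneg continuous_arcsin.continuousOn
    (fun s hs => hasDerivAt_arcsin_of_mem_Ioo (by simpa using hs))
    (fun s _ => by positivity)

lemma integral_one_div_sqrt_one_sub_sq : ∫ s in (-1 : ℝ)..1, 1 / √(1 - s ^ 2) = π := by
  rw [intervalIntegral.integral_eq_sub_of_hasDerivAt_of_le (by norm_num)
    continuous_arcsin.continuousOn (fun s hs => hasDerivAt_arcsin_of_mem_Ioo hs)
    intervalIntegrable_one_div_sqrt_one_sub_sq, arcsin_one, arcsin_neg_one]
  ring

lemma norm_sub_le_mul_pi_of_norm_deriv_le [CompleteSpace X] {F F' : ℝ → X} {K : ℝ}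
    (hF : ∀ s, HasDerivAt F (F' s) s) (hF' : Continuous F')
    (hbound : ∀ s, |s| < 1 → ‖F' s‖ ≤ K / √(1 - s ^ 2)) :
    ‖F 1 - F (-1)‖ ≤ K * π := by
  rw [← intervalIntegral.integral_eq_sub_of_hasDerivAt (fun s _ => hF s)
    (hF'.intervalIntegrable _ _), ← integral_one_div_sqrt_one_sub_sq,
    ← intervalIntegral.integral_const_mul]
  refine intervalIntegral.norm_integral_le_of_norm_le (by norm_num) ?_
    (intervalIntegrable_one_div_sqrt_one_sub_sq.const_mul K)
  filter_upwards [Measure.ae_ne volume 1] with s hs1 hs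
  rw [mul_one_div]
  exact hbound s (abs_lt.2 ⟨hs.1, lt_of_le_of_ne hs.2 hs1⟩)

end Analysis

section Cube

variable {n : ℕ}

lemma sgn_not (b : Bool) : sgn (!b) = -sgn b := by cases b <;> simp [sgn]

lemma flip'_involutive (j : Fin n) : Function.Involutive (flip' j) := by
  intro x
  ext i
  rcases eq_or_ne i j with rfl | h
  · simp [flip']
  · simp [flip', Function.update_of_ne h]

lemma flip'_apply_self (j : Fin n) (x : Fin n → Bool) : flip' j x j = !x j := by
  simp [flip']

lemma flip'_apply_of_ne {i j : Fin n} (h : i ≠ j) (x : Fin n → Bool) : flip' j x i = x i :=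
  Function.update_of_ne h _ _

lemma cmul_flip' (j : Fin n) (ε ξ : Fin n → Bool) :
    cmul ε (flip' j ξ) = flip' j (cmul ε ξ) := by
  ext i
  rcases eq_or_ne i j with rfl | h
  · simp only [cmul, flip', Function.update_self]
    cases ε i <;> cases ξ i <;> rfl
  · simp only [cmul, flip'_apply_of_ne h]

lemma cmul_involutive (ξ : Fin n → Bool) : Function.Involutive (cmul · ξ) := by
  intro ε
  ext i
  simp only [cmul]
  cases ε i <;> cases ξ i <;> rfl

lemma cmul_const_true (ε : Fin n → Bool) : cmul ε (fun _ => true) = ε := by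
  ext i
  simp [cmul]

lemma cmul_const_false (ε : Fin n → Bool) : cmul ε (fun _ => false) = fun i => !ε i := by
  ext i
  simp [cmul]

end Cube

section Weights

variable {n : ℕ}

def coordWeight (s : ℝ) (b : Bool) : ℝ := (1 + s * sgn b) / 2

lemma coordWeight_nonneg {s : ℝ} (hs : |s| ≤ 1) (b : Bool) : 0 ≤ coordWeight s b := by
  rw [abs_le] at hs
  cases b <;> simp [coordWeight, sgn] <;> linarith

lemma coordWeight_true_add_false (s : ℝ) : coordWeight s true + coordWeight s false = 1 := by
  simp [coordWeight, sgn]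
  ring

lemma coordWeight_sgn (b b' : Bool) : coordWeight (sgn b) b' = if b' = b then 1 else 0 := by
  cases b <;> cases b' <;> norm_num [coordWeight, sgn]

lemma coordWeight_mul_sgn_sub (s : ℝ) (b : Bool) :
    coordWeight s b * (sgn b - s) = (1 - s ^ 2) * (sgn b / 2) := by
  cases b <;> simp [coordWeight, sgn] <;> ring

def cubeWeight (s : ℝ) (ξ : Fin n → Bool) : ℝ := ∏ i, coordWeight s (ξ i)

lemma cubeWeight_nonneg {s : ℝ} (hs : |s| ≤ 1) (ξ : Fin n → Bool) : 0 ≤ cubeWeight s ξ :=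
  prod_nonneg fun i _ => coordWeight_nonneg hs (ξ i)

lemma sum_cubeWeight (s : ℝ) : ∑ ξ : Fin n → Bool, cubeWeight s ξ = 1 := by
  simp [cubeWeight, ← Fintype.prod_sum, coordWeight_true_add_false]

lemma sum_cubeWeight_mul_apply (s : ℝ) (j : Fin n) (g : Bool → ℝ) :
    ∑ ξ : Fin n → Bool, cubeWeight s ξ * g (ξ j) = ∑ b, coordWeight s b * g b := by
  calc ∑ ξ : Fin n → Bool, cubeWeight s ξ * g (ξ j)
      = ∑ ξ : Fin n → Bool, ∏ i, coordWeight s (ξ i) * if i = j then g (ξ i) else 1 := by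
        simp only [cubeWeight, prod_mul_distrib, prod_ite_eq', mem_univ, if_true]
    _ = ∏ i, ∑ b, coordWeight s b * if i = j then g b else 1 := by
        rw [Fintype.prod_sum]
    _ = ∑ b, coordWeight s b * g b := by
        simp [apply_ite, coordWeight_true_add_false, prod_ite_eq']

lemma sum_sum_cubeWeight_mul_apply (s : ℝ) (j : Fin n) (g : Bool → Bool → ℝ) :
    ∑ ξ : Fin n → Bool, ∑ ξ' : Fin n → Bool, cubeWeight s ξ * cubeWeight s ξ' * g (ξ j) (ξ' j) =
      ∑ b, ∑ b', coordWeight s b * coordWeight s b' * g b b' := by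
  simp_rw [mul_assoc, ← mul_sum, sum_cubeWeight_mul_apply s j (g _),
    sum_cubeWeight_mul_apply s j (fun b => ∑ b', coordWeight s b' * g b b')]

lemma cubeWeight_sgn (b : Bool) (ξ : Fin n → Bool) :
    cubeWeight (sgn b) ξ = if ξ = fun _ => b then 1 else 0 := by
  simp [cubeWeight, coordWeight_sgn, prod_boole, funext_iff]

def cubeWeightDeriv (s : ℝ) (ξ : Fin n → Bool) : ℝ :=
  ∑ j, (∏ i ∈ univ.erase j, coordWeight s (ξ i)) * (sgn (ξ j) / 2)

lemma hasDerivAt_cubeWeight (ξ : Fin n → Bool) (s : ℝ) :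
    HasDerivAt (cubeWeight · ξ) (cubeWeightDeriv s ξ) s := by
  have h : ∀ i ∈ univ, HasDerivAt (coordWeight · (ξ i)) (sgn (ξ i) / 2) s := fun i _ => by
    unfold coordWeight
    simpa using (((hasDerivAt_id s).mul_const (sgn (ξ i))).const_add 1).div_const 2
  simpa [cubeWeight, cubeWeightDeriv] using HasDerivAt.fun_finsetProd h

lemma continuous_cubeWeightDeriv (ξ : Fin n → Bool) : Continuous (cubeWeightDeriv · ξ) := by
  unfold cubeWeightDeriv coordWeight
  fun_prop

lemma one_sub_sq_mul_prod_erase (s : ℝ) (ξ : Fin n → Bool) (j : Fin n) :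
    (1 - s ^ 2) * ((∏ i ∈ univ.erase j, coordWeight s (ξ i)) * (sgn (ξ j) / 2)) =
      cubeWeight s ξ * (sgn (ξ j) - s) := by
  rw [cubeWeight, ← mul_prod_erase univ _ (mem_univ j), mul_right_comm,
    coordWeight_mul_sgn_sub]
  ring

lemma sum_sum_cubeWeight_mul_sgn_sub (s : ℝ) (e : Fin n → Bool) (Φ : (Fin n → ℝ) → ℝ) :
    ∑ ξ, ∑ ξ', cubeWeight s ξ * cubeWeight s ξ' * Φ (fun j => sgn (ξ j) - sgn (ξ' j)) =
      ∑ ξ, ∑ ξ', cubeWeight s ξ * cubeWeight s ξ' *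
        Φ (fun j => sgn (e j) * (sgn (ξ j) - sgn (ξ' j))) := by
  let swap (z : (Fin n → Bool) × (Fin n → Bool)) : (Fin n → Bool) × (Fin n → Bool) :=
    (fun i => if e i then z.1 i else z.2 i, fun i => if e i then z.2 i else z.1 i)
  have hswap : Function.Involutive swap := by
    intro z
    ext i <;> by_cases h : e i <;> simp [swap, h]
  simp only [← Fintype.sum_prod_type']
  rw [← Equiv.sum_comp hswap.toPerm]
  refine sum_congr rfl fun z _ => ?_
  have hweight : cubeWeight s (swap z).1 * cubeWeight s (swap z).2 =
      cubeWeight s z.1 * cubeWeight s z.2 := by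
    simp only [cubeWeight, ← prod_mul_distrib]
    exact prod_congr rfl fun i _ => by by_cases h : e i <;> simp [swap, h, mul_comm]
  have hdiff : (fun j => sgn ((swap z).1 j) - sgn ((swap z).2 j)) =
      fun j => sgn (e j) * (sgn (z.1 j) - sgn (z.2 j)) := by
    ext j
    by_cases h : e j <;> simp only [swap, h] <;> simp [sgn]
  simp only [Function.Involutive.coe_toPerm, hweight, hdiff]

lemma sum_sum_cubeWeight_mul_abs_sgn_sub_rpow {p : ℝ} (hp : p ≠ 0) (s : ℝ) (j : Fin n) :
    ∑ ξ : Fin n → Bool, ∑ ξ' : Fin n → Bool,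
      cubeWeight s ξ * cubeWeight s ξ' * |sgn (ξ j) - sgn (ξ' j)| ^ p =
      (1 - s ^ 2) / 2 * 2 ^ p := by
  rw [sum_sum_cubeWeight_mul_apply s j (fun b b' => |sgn b - sgn b'| ^ p)]
  norm_num [coordWeight, sgn, zero_rpow hp]
  ring

end Weights

section Noise

variable {X : Type*} [NormedAddCommGroup X] [NormedSpace ℝ X] {n : ℕ}

def discreteDeriv (j : Fin n) (f : (Fin n → Bool) → X) (y : Fin n → Bool) : X :=
  (2 : ℝ)⁻¹ • (f y - f (flip' j y))

def noise (f : (Fin n → Bool) → X) (s : ℝ) (ε : Fin n → Bool) : X :=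
  ∑ ξ, cubeWeight s ξ • f (cmul ε ξ)

def noiseDeriv (f : (Fin n → Bool) → X) (s : ℝ) (ε : Fin n → Bool) : X :=
  ∑ ξ, cubeWeightDeriv s ξ • f (cmul ε ξ)

lemma hasDerivAt_noise (f : (Fin n → Bool) → X) (s : ℝ) :
    HasDerivAt (noise f) (noiseDeriv f s) s :=
  hasDerivAt_pi.2 fun _ => HasDerivAt.fun_sum fun ξ _ =>
    (hasDerivAt_cubeWeight ξ s).smul_const _

lemma continuous_noiseDeriv (f : (Fin n → Bool) → X) : Continuous (noiseDeriv f) :=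
  continuous_pi fun _ => continuous_finsetSum _ fun ξ _ =>
    (continuous_cubeWeightDeriv ξ).smul continuous_const

lemma noise_sgn (f : (Fin n → Bool) → X) (b : Bool) :
    noise f (sgn b) = fun ε => f (cmul ε fun _ => b) := by
  ext ε
  simp [noise, cubeWeight_sgn, ite_smul]

lemma sum_smul_eq_sum_smul_discreteDeriv {v : (Fin n → Bool) → ℝ} {j : Fin n}
    (hv : ∀ ξ, v (flip' j ξ) = -v ξ) (g : (Fin n → Bool) → X) :
    ∑ ξ, v ξ • g ξ = ∑ ξ, v ξ • discreteDeriv j g ξ := by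
  have hflip : ∑ ξ, v ξ • g (flip' j ξ) = -∑ ξ, v ξ • g ξ := by
    rw [← Equiv.sum_comp (flip'_involutive j).toPerm]
    simp [hv, flip'_involutive j _]
  simp only [discreteDeriv, smul_comm (v _) (2 : ℝ)⁻¹, ← smul_sum, smul_sub, sum_sub_distrib,
    hflip]
  module

lemma one_sub_sq_smul_noiseDeriv (f : (Fin n → Bool) → X) (s : ℝ) (ε : Fin n → Bool) :
    (1 - s ^ 2) • noiseDeriv f s ε =
      ∑ ξ, cubeWeight s ξ • ∑ j, (sgn (ξ j) - s) • discreteDeriv j f (cmul ε ξ) := by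
  set v : Fin n → (Fin n → Bool) → ℝ := fun j ξ =>
    (∏ i ∈ univ.erase j, coordWeight s (ξ i)) * (sgn (ξ j) / 2)
  have hodd (j : Fin n) (ξ : Fin n → Bool) : v j (flip' j ξ) = -v j ξ := by
    have hrest : ∏ i ∈ univ.erase j, coordWeight s (flip' j ξ i) =
        ∏ i ∈ univ.erase j, coordWeight s (ξ i) :=
      prod_congr rfl fun i hi => by rw [flip'_apply_of_ne (ne_of_mem_erase hi)]
    simp only [v, hrest, flip'_apply_self, sgn_not]
    ring
  calc (1 - s ^ 2) • noiseDeriv f s ε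
      = ∑ j, (1 - s ^ 2) • ∑ ξ, v j ξ • f (cmul ε ξ) := by
        simp only [noiseDeriv, cubeWeightDeriv, sum_smul, ← smul_sum]
        rw [sum_comm]
    _ = ∑ j, (1 - s ^ 2) • ∑ ξ, v j ξ • discreteDeriv j f (cmul ε ξ) := by
        refine sum_congr rfl fun j _ => ?_
        rw [sum_smul_eq_sum_smul_discreteDeriv (hodd j)]
        simp only [discreteDeriv, cmul_flip']
    _ = _ := by
        simp only [smul_sum, smul_smul, v, one_sub_sq_mul_prod_erase, mul_comm (cubeWeight s _)]
        rw [sum_comm]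

lemma sum_norm_sum_cubeWeight_smul_rpow_le {p s : ℝ} (hp : 1 ≤ p) (hs : |s| ≤ 1)
    (G : (Fin n → Bool) → (Fin n → Bool) → X) :
    ∑ ε, ‖∑ ξ, cubeWeight s ξ • G ξ (cmul ε ξ)‖ ^ p ≤
      ∑ η, ∑ ξ, cubeWeight s ξ * ‖G ξ η‖ ^ p := by
  calc ∑ ε, ‖∑ ξ, cubeWeight s ξ • G ξ (cmul ε ξ)‖ ^ p
      ≤ ∑ ε, ∑ ξ, cubeWeight s ξ * ‖G ξ (cmul ε ξ)‖ ^ p :=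
        sum_le_sum fun ε _ => norm_sum_smul_rpow_le hp _
          (fun ξ _ => cubeWeight_nonneg hs ξ) (sum_cubeWeight s) _
    _ = ∑ η, ∑ ξ, cubeWeight s ξ * ‖G ξ η‖ ^ p := by
        rw [sum_comm, sum_comm (f := fun η ξ => cubeWeight s ξ * ‖G ξ η‖ ^ p)]
        exact sum_congr rfl fun ξ _ =>
          Equiv.sum_comp (cmul_involutive ξ).toPerm (fun η => cubeWeight s ξ * ‖G ξ η‖ ^ p)

lemma sum_sgn_sub_smul_eq_sum_cubeWeight_smul (s : ℝ) (ξ : Fin n → Bool) (x : Fin n → X) :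
    ∑ j, (sgn (ξ j) - s) • x j =
      ∑ ξ', cubeWeight s ξ' • ∑ j, (sgn (ξ j) - sgn (ξ' j)) • x j := by
  have hmean (j : Fin n) :
      ∑ ξ' : Fin n → Bool, cubeWeight s ξ' * (sgn (ξ j) - sgn (ξ' j)) = sgn (ξ j) - s := by
    rw [sum_cubeWeight_mul_apply s j (fun b => sgn (ξ j) - sgn b)]
    simp [coordWeight, sgn]
    ring
  simp only [smul_sum, smul_smul]
  rw [sum_comm]
  simp only [← sum_smul, hmean]

variable {p C : ℝ}

lemma sum_sum_cubeWeight_mul_norm_sgn_sub_smul_rpow_le (hp : p ≠ 0)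
    (hT : ∀ x : Fin n → X,
      (∑ ε : Fin n → Bool, ‖∑ j, sgn (ε j) • x j‖ ^ p) / 2 ^ n ≤ C ^ p * ∑ j, ‖x j‖ ^ p)
    (s : ℝ) (hs : |s| ≤ 1) (x : Fin n → X) :
    ∑ ξ : Fin n → Bool, ∑ ξ' : Fin n → Bool, cubeWeight s ξ * cubeWeight s ξ' *
        ‖∑ j, (sgn (ξ j) - sgn (ξ' j)) • x j‖ ^ p ≤
      (1 - s ^ 2) / 2 * 2 ^ p * (C ^ p * ∑ j, ‖x j‖ ^ p) := by
  set S := ∑ ξ : Fin n → Bool, ∑ ξ' : Fin n → Bool, cubeWeight s ξ * cubeWeight s ξ' *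
    ‖∑ j, (sgn (ξ j) - sgn (ξ' j)) • x j‖ ^ p
  have hsigned (e : Fin n → Bool) : S = ∑ ξ : Fin n → Bool, ∑ ξ' : Fin n → Bool,
      cubeWeight s ξ * cubeWeight s ξ' * ‖∑ j, sgn (e j) • (sgn (ξ j) - sgn (ξ' j)) • x j‖ ^ p := by
    simpa only [mul_smul] using
      sum_sum_cubeWeight_mul_sgn_sub s e (fun d => ‖∑ j, d j • x j‖ ^ p)
  calc S = (∑ e : Fin n → Bool, S) / 2 ^ n := by simp
    _ = ∑ ξ : Fin n → Bool, ∑ ξ' : Fin n → Bool, cubeWeight s ξ * cubeWeight s ξ' *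
          ((∑ e : Fin n → Bool,
            ‖∑ j, sgn (e j) • (sgn (ξ j) - sgn (ξ' j)) • x j‖ ^ p) / 2 ^ n) := by
        conv_lhs => rw [sum_congr rfl fun e _ => hsigned e]
        simp only [mul_div_assoc', mul_sum, sum_div]
        rw [sum_comm]
        exact sum_congr rfl fun ξ _ => sum_comm
    _ ≤ ∑ ξ : Fin n → Bool, ∑ ξ' : Fin n → Bool, cubeWeight s ξ * cubeWeight s ξ' *
          (C ^ p * ∑ j, ‖(sgn (ξ j) - sgn (ξ' j)) • x j‖ ^ p) := by
        gcongr with ξ _ ξ' _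
        · exact mul_nonneg (cubeWeight_nonneg hs ξ) (cubeWeight_nonneg hs ξ')
        · exact hT _
    _ = C ^ p * ∑ j, (∑ ξ : Fin n → Bool, ∑ ξ' : Fin n → Bool, cubeWeight s ξ * cubeWeight s ξ' *
          |sgn (ξ j) - sgn (ξ' j)| ^ p) * ‖x j‖ ^ p := by
        simp only [norm_smul, Real.norm_eq_abs, Real.mul_rpow (abs_nonneg _) (norm_nonneg _),
          mul_sum, sum_mul]
        refine (sum_congr rfl fun ξ _ => sum_comm).trans (sum_comm.trans ?_)
        exact sum_congr rfl fun j _ => sum_congr rfl fun ξ _ => sum_congr rfl fun ξ' _ => by ring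
    _ = (1 - s ^ 2) / 2 * 2 ^ p * (C ^ p * ∑ j, ‖x j‖ ^ p) := by
        simp only [sum_sum_cubeWeight_mul_abs_sgn_sub_rpow hp, ← mul_sum]
        ring

lemma sum_cubeWeight_mul_norm_sgn_sub_smul_rpow_le (hp : 1 ≤ p)
    (hT : ∀ x : Fin n → X,
      (∑ ε : Fin n → Bool, ‖∑ j, sgn (ε j) • x j‖ ^ p) / 2 ^ n ≤ C ^ p * ∑ j, ‖x j‖ ^ p)
    (s : ℝ) (hs : |s| ≤ 1) (x : Fin n → X) :
    ∑ ξ : Fin n → Bool, cubeWeight s ξ * ‖∑ j, (sgn (ξ j) - s) • x j‖ ^ p ≤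
      (1 - s ^ 2) / 2 * 2 ^ p * (C ^ p * ∑ j, ‖x j‖ ^ p) := by
  calc ∑ ξ : Fin n → Bool, cubeWeight s ξ * ‖∑ j, (sgn (ξ j) - s) • x j‖ ^ p
      ≤ ∑ ξ : Fin n → Bool, cubeWeight s ξ * ∑ ξ' : Fin n → Bool,
          cubeWeight s ξ' * ‖∑ j, (sgn (ξ j) - sgn (ξ' j)) • x j‖ ^ p := by
        gcongr with ξ
        · exact cubeWeight_nonneg hs ξ
        · rw [sum_sgn_sub_smul_eq_sum_cubeWeight_smul]
          exact norm_sum_smul_rpow_le hp _ (fun ξ' _ => cubeWeight_nonneg hs ξ')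
            (sum_cubeWeight s) _
    _ = ∑ ξ : Fin n → Bool, ∑ ξ' : Fin n → Bool, cubeWeight s ξ * cubeWeight s ξ' *
          ‖∑ j, (sgn (ξ j) - sgn (ξ' j)) • x j‖ ^ p := by
        simp only [mul_sum, mul_assoc]
    _ ≤ _ := sum_sum_cubeWeight_mul_norm_sgn_sub_smul_rpow_le (by positivity) hT s hs x

lemma one_sub_sq_rpow_mul_sum_norm_noiseDeriv_rpow_le (hp : 1 ≤ p)
    (hT : ∀ x : Fin n → X,
      (∑ ε : Fin n → Bool, ‖∑ j, sgn (ε j) • x j‖ ^ p) / 2 ^ n ≤ C ^ p * ∑ j, ‖x j‖ ^ p)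
    (f : (Fin n → Bool) → X) (s : ℝ) (hs : |s| ≤ 1) :
    (1 - s ^ 2) ^ p * ∑ ε, ‖noiseDeriv f s ε‖ ^ p ≤
      (1 - s ^ 2) / 2 * 2 ^ p * (C ^ p * ∑ j, ∑ η, ‖discreteDeriv j f η‖ ^ p) := by
  have hu : 0 ≤ 1 - s ^ 2 := sub_nonneg.2 ((sq_le_one_iff_abs_le_one s).2 hs)
  calc (1 - s ^ 2) ^ p * ∑ ε, ‖noiseDeriv f s ε‖ ^ p
      = ∑ ε, ‖∑ ξ, cubeWeight s ξ • ∑ j, (sgn (ξ j) - s) • discreteDeriv j f (cmul ε ξ)‖ ^ p := by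
        refine (mul_sum _ _ _).trans (sum_congr rfl fun ε _ => ?_)
        rw [← one_sub_sq_smul_noiseDeriv, norm_smul, Real.norm_of_nonneg hu,
          Real.mul_rpow hu (norm_nonneg _)]
    _ ≤ ∑ η, ∑ ξ, cubeWeight s ξ * ‖∑ j, (sgn (ξ j) - s) • discreteDeriv j f η‖ ^ p :=
        sum_norm_sum_cubeWeight_smul_rpow_le hp hs
          (fun ξ η => ∑ j, (sgn (ξ j) - s) • discreteDeriv j f η)
    _ ≤ ∑ η, (1 - s ^ 2) / 2 * 2 ^ p * (C ^ p * ∑ j, ‖discreteDeriv j f η‖ ^ p) :=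
        sum_le_sum fun η _ => sum_cubeWeight_mul_norm_sgn_sub_smul_rpow_le hp hT s hs
          (fun j => discreteDeriv j f η)
    _ = _ := by rw [← mul_sum, ← mul_sum, sum_comm]

lemma norm_toLp_noiseDeriv_le (hp1 : 1 ≤ p) (hp2 : p ≤ 2) (hC : 0 ≤ C)
    (hT : ∀ x : Fin n → X,
      (∑ ε : Fin n → Bool, ‖∑ j, sgn (ε j) • x j‖ ^ p) / 2 ^ n ≤ C ^ p * ∑ j, ‖x j‖ ^ p)
    (f : (Fin n → Bool) → X) {s : ℝ} (hs : |s| < 1) :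
    ‖WithLp.toLp (ENNReal.ofReal p) (noiseDeriv f s)‖ ≤
      √2 * (C * (∑ j, ∑ η, ‖discreteDeriv j f η‖ ^ p) ^ p⁻¹) / √(1 - s ^ 2) := by
  have hp0 : 0 < p := by linarith
  have : Fact (1 ≤ ENNReal.ofReal p) := ⟨ENNReal.one_le_ofReal.2 hp1⟩
  have hR : 0 ≤ ∑ j, ∑ η, ‖discreteDeriv j f η‖ ^ p := by positivity
  refine le_sqrt_two_mul_div_sqrt_of_rpow_le hp1 hp2
    (sub_pos.2 ((sq_lt_one_iff_abs_lt_one s).2 hs)) (by nlinarith [sq_nonneg s])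
    (norm_nonneg _) (by positivity) ?_
  rw [norm_toLp_ofReal_rpow hp0, mul_rpow hC (rpow_nonneg hR _), rpow_inv_rpow hR hp0.ne']
  exact one_sub_sq_rpow_mul_sum_norm_noiseDeriv_rpow_le hp1 hT f s hs.le

lemma sum_norm_half_smul_sub_neg_rpow_le [CompleteSpace X] (hp1 : 1 ≤ p) (hp2 : p ≤ 2)
    (hC : 0 ≤ C)
    (hT : ∀ x : Fin n → X,
      (∑ ε : Fin n → Bool, ‖∑ j, sgn (ε j) • x j‖ ^ p) / 2 ^ n ≤ C ^ p * ∑ j, ‖x j‖ ^ p)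
    (f : (Fin n → Bool) → X) :
    ∑ ε, ‖(2 : ℝ)⁻¹ • (f ε - f fun i => !ε i)‖ ^ p ≤
      (π / √2 * C) ^ p * ∑ j, ∑ ε, ‖discreteDeriv j f ε‖ ^ p := by
  have hp0 : 0 < p := by linarith
  have : Fact (1 ≤ ENNReal.ofReal p) := ⟨ENNReal.one_le_ofReal.2 hp1⟩
  set R := ∑ j, ∑ ε, ‖discreteDeriv j f ε‖ ^ p
  have hR : 0 ≤ R := by positivity
  let L := (PiLp.continuousLinearEquiv (ENNReal.ofReal p) ℝ fun _ : Fin n → Bool => X).symm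
  have hends : L (noise f 1) - L (noise f (-1)) = (2 : ℝ) •
      WithLp.toLp (ENNReal.ofReal p) fun ε => (2 : ℝ)⁻¹ • (f ε - f fun i => !ε i) := by
    have h1 : noise f 1 = f := by simpa [sgn, cmul_const_true] using noise_sgn f true
    have h2 : noise f (-1) = fun ε => f fun i => !ε i := by
      simpa [sgn, cmul_const_false] using noise_sgn f false
    rw [h1, h2]
    ext ε
    simp [L, smul_smul]
  have hbound := norm_sub_le_mul_pi_of_norm_deriv_le (F := fun s => L (noise f s))
    (fun s => L.hasFDerivAt.comp_hasDerivAt s (hasDerivAt_noise f s))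
    (L.continuous.comp (continuous_noiseDeriv f))
    (fun s hs => norm_toLp_noiseDeriv_le hp1 hp2 hC hT f hs)
  rw [hends, norm_smul, Real.norm_two] at hbound
  rw [← norm_toLp_ofReal_rpow hp0, ← rpow_inv_rpow hR hp0.ne',
    ← mul_rpow (by positivity) (by positivity)]
  gcongr
  have hπ : π / √2 = √2 * π / 2 := by
    field_simp
    rw [sq_sqrt zero_le_two]
  rw [hπ]
  linarith

end Noise

/-- Rademacher type p implies Enflo type p with constant (π/√2)·C. -/
theorem stmt13 (X : Type*) [NormedAddCommGroup X] [NormedSpace ℝ X] [CompleteSpace X]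
    (p C : ℝ) (hp1 : 1 ≤ p) (hp2 : p ≤ 2) (hC : 0 ≤ C)
    (hT : ∀ (m : ℕ) (x : Fin m → X),
      (∑ ε : Fin m → Bool, ‖∑ j : Fin m, sgn (ε j) • x j‖ ^ p) / 2^m ≤
        C ^ p * ∑ j : Fin m, ‖x j‖ ^ p) :
    ∀ (n : ℕ) (f : (Fin n → Bool) → X),
      (∑ ε : Fin n → Bool, ‖(2:ℝ)⁻¹ • (f ε - f (fun i => !(ε i)))‖ ^ p) / 2^n ≤
        ((π / Real.sqrt 2) * C) ^ p *
          ∑ j : Fin n, (∑ ε : Fin n → Bool, ‖(2:ℝ)⁻¹ • (f ε - f (flip' j ε))‖ ^ p) / 2^n := by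
  intro n f
  rw [← sum_div, ← mul_div_assoc]
  gcongr
  exact sum_norm_half_smul_sub_neg_rpow_le hp1 hp2 hC (hT n) f

end
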